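/- Let A ∈ ℝ^{m×d}, Y ∈ ℝ^{m×n}, λ > 0, 1 ≤ q < 2, and 0 < p < 2. Let X_k ∈ ℝ^{d×n} be such that every row of X_k and every row of AX_k − Y is nonzero. Define the diagonal matrices G_k with (G_k)_{ii} = 1/‖(AX_k − Y)^i‖₂^{2−q} and H_k with (H_k)_{ii} = 1/‖X_k^i‖₂^{2−p}, the function Q_k(X) = Tr((AX − Y)ᵀG_k(AX − Y)) + λ·(p/q)·Tr(XᵀH_kX), and J(X) = Σ_{i=1}^m ‖(AX − Y)^i‖₂^q + λ·Σ_{i=1}^d ‖X^i‖₂^p. If X_{k+1} satisfies Q_k(X_{k+1}) ≤ Q_k(X_k) and additionally J(X_{k+1}) = J(X_k), then ‖(AX_{k+1} − Y)^i‖₂ = ‖(AX_k − Y)^i‖₂ for every i = 1, …, m and ‖X_{k+1}^i‖₂ = ‖X_k^i‖₂ for every i = 1, …, d. -/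

import Mathlib

/-!
For `r > 0` and `0 < q < 2`, weighted AM–GM applied to `(s / r)²` and `1` with weights `q / 2`,
`1 - q / 2` shows that the quadratic `q/2 · s² / r^(2-q) + (1 - q/2) · r^q` majorizes `s ↦ s^q`
on `s ≥ 0`, touching it only at `s = r`. Summed over the rows this gives
`J(X) ≤ (q/2) Q_k(X) + C_k`, where `C_k` depends only on `X_k`, with equality at `X = X_k`.
Hence `Q_k(X_{k+1}) ≤ Q_k(X_k)` and `J(X_{k+1}) = J(X_k)` force every row-wise majorization at
`X_{k+1}` to be tight, i.e. every row norm is unchanged.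
-/

open Matrix

/-- Euclidean norm of the i-th row of a matrix. -/
noncomputable def rowNorm {m n : ℕ} (M : Matrix (Fin m) (Fin n) ℝ) (i : Fin m) : ℝ :=
  Real.sqrt (∑ j, M i j ^ 2)

open Finset

lemma rowNorm_nonneg {m n : ℕ} (M : Matrix (Fin m) (Fin n) ℝ) (i : Fin m) : 0 ≤ rowNorm M i :=
  Real.sqrt_nonneg _

lemma rowNorm_pos {m n : ℕ} {M : Matrix (Fin m) (Fin n) ℝ} {i : Fin m} (h : M i ≠ 0) :
    0 < rowNorm M i := by
  obtain ⟨j, hj⟩ := Function.ne_iff.1 h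
  exact Real.sqrt_pos.2 <|
    sum_pos' (fun j _ => sq_nonneg _) ⟨j, mem_univ _, by simpa using sq_pos_of_ne_zero hj⟩

lemma rowNorm_sq {m n : ℕ} (M : Matrix (Fin m) (Fin n) ℝ) (i : Fin m) :
    rowNorm M i ^ 2 = ∑ j, M i j ^ 2 :=
  Real.sq_sqrt (sum_nonneg fun _ _ => sq_nonneg _)

lemma trace_transpose_mul_diagonal_mul {m n : ℕ} (w : Fin m → ℝ)
    (M : Matrix (Fin m) (Fin n) ℝ) :
    trace (Mᵀ * diagonal w * M) = ∑ i, w i * rowNorm M i ^ 2 := by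
  simp only [trace, diag_apply, mul_apply, transpose_apply, diagonal_apply, mul_ite, mul_zero,
    sum_ite_eq', mem_univ, if_true, rowNorm_sq, mul_sum]
  rw [sum_comm]
  exact sum_congr rfl fun i _ => sum_congr rfl fun j _ => by ring

section Majorant

variable {q r s : ℝ}

lemma sq_div_rpow_two_sub (hr : 0 < r) (q : ℝ) : r ^ 2 / r ^ (2 - q) = r ^ q := by
  rw [div_eq_iff (Real.rpow_pos_of_pos hr _).ne', ← Real.rpow_add hr, add_sub_cancel]
  norm_cast

lemma rpow_lt_majorant (hq0 : 0 < q) (hq2 : q < 2) (hr : 0 < r) (hs : 0 ≤ s) (hsr : s ≠ r) :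
    s ^ q < q / 2 * (s ^ 2 / r ^ (2 - q)) + (1 - q / 2) * r ^ q := by
  have hx0 : 0 ≤ s / r := div_nonneg hs hr.le
  have hx1 : (s / r) ^ 2 ≠ 1 := by
    rwa [ne_eq, pow_eq_one_iff_of_nonneg hx0 two_ne_zero, div_eq_one_iff_eq hr.ne']
  have hpow : ((s / r) ^ 2) ^ (q / 2) = (s / r) ^ q := by
    rw [← Real.rpow_natCast, ← Real.rpow_mul hx0]
    congr 1
    push_cast
    ring
  have amgm := (Real.geom_mean_lt_arith_mean2_weighted_iff_of_pos (by linarith : 0 < q / 2)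
    (by linarith : 0 < 1 - q / 2) (sq_nonneg (s / r)) zero_le_one (by ring)).2 hx1
  rw [Real.one_rpow, mul_one, mul_one, hpow] at amgm
  have hrq : 0 < r ^ q := Real.rpow_pos_of_pos hr q
  calc s ^ q = (s / r) ^ q * r ^ q := by rw [Real.div_rpow hs hr.le, div_mul_cancel₀ _ hrq.ne']
    _ < (q / 2 * (s / r) ^ 2 + (1 - q / 2)) * r ^ q := by gcongr
    _ = _ := by
      rw [← sq_div_rpow_two_sub hr q]
      field_simp

lemma rpow_le_majorant (hq0 : 0 < q) (hq2 : q < 2) (hr : 0 < r) (hs : 0 ≤ s) :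
    s ^ q ≤ q / 2 * (s ^ 2 / r ^ (2 - q)) + (1 - q / 2) * r ^ q := by
  rcases eq_or_ne s r with rfl | hsr
  · rw [sq_div_rpow_two_sub hr]
    linarith
  · exact (rpow_lt_majorant hq0 hq2 hr hs hsr).le

end Majorant

section Sums

variable {ι : Type*} [Fintype ι] {q : ℝ} {r s : ι → ℝ}

lemma sum_majorant (q : ℝ) (r s : ι → ℝ) :
    q / 2 * ∑ i, s i ^ 2 / r i ^ (2 - q) + (1 - q / 2) * ∑ i, r i ^ q
      = ∑ i, (q / 2 * (s i ^ 2 / r i ^ (2 - q)) + (1 - q / 2) * r i ^ q) := by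
  rw [mul_sum, mul_sum, ← sum_add_distrib]

lemma sum_rpow_le_sum_majorant (hq0 : 0 < q) (hq2 : q < 2) (hr : ∀ i, 0 < r i)
    (hs : ∀ i, 0 ≤ s i) :
    ∑ i, s i ^ q ≤ q / 2 * ∑ i, s i ^ 2 / r i ^ (2 - q) + (1 - q / 2) * ∑ i, r i ^ q := by
  rw [sum_majorant]
  exact sum_le_sum fun i _ => rpow_le_majorant hq0 hq2 (hr i) (hs i)

lemma eq_of_sum_majorant_le_sum_rpow (hq0 : 0 < q) (hq2 : q < 2) (hr : ∀ i, 0 < r i)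
    (hs : ∀ i, 0 ≤ s i)
    (h : q / 2 * ∑ i, s i ^ 2 / r i ^ (2 - q) + (1 - q / 2) * ∑ i, r i ^ q ≤ ∑ i, s i ^ q) :
    ∀ i, s i = r i := by
  by_contra! ⟨i, hi⟩
  rw [sum_majorant] at h
  exact not_lt.2 h <| sum_lt_sum (fun i _ => rpow_le_majorant hq0 hq2 (hr i) (hs i))
    ⟨i, mem_univ _, rpow_lt_majorant hq0 hq2 (hr i) (hs i) hi⟩

end Sums

/-- If Q_k(X_{k+1}) ≤ Q_k(X_k) and moreover J(X_{k+1}) = J(X_k), then all row norms of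
AX − Y and of X are preserved from step k to step k+1. -/
theorem stmt_15 {m d n : ℕ} (A : Matrix (Fin m) (Fin d) ℝ) (Y : Matrix (Fin m) (Fin n) ℝ)
    (lam q p : ℝ) (hlam : 0 < lam) (hq1 : 1 ≤ q) (hq2 : q < 2) (hp0 : 0 < p) (hp2 : p < 2)
    (Xk Xk1 : Matrix (Fin d) (Fin n) ℝ)
    (hrowX : ∀ i, Xk i ≠ 0) (hrowR : ∀ i, (A * Xk - Y) i ≠ 0) :
    let Gk : Matrix (Fin m) (Fin m) ℝ :=
      Matrix.diagonal (fun i => 1 / rowNorm (A * Xk - Y) i ^ (2 - q))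
    let Hk : Matrix (Fin d) (Fin d) ℝ :=
      Matrix.diagonal (fun i => 1 / rowNorm Xk i ^ (2 - p))
    let Qk : Matrix (Fin d) (Fin n) ℝ → ℝ := fun X =>
      Matrix.trace ((A * X - Y)ᵀ * Gk * (A * X - Y)) + lam * (p / q) * Matrix.trace (Xᵀ * Hk * X)
    let J : Matrix (Fin d) (Fin n) ℝ → ℝ := fun X =>
      ∑ i, rowNorm (A * X - Y) i ^ q + lam * ∑ i, rowNorm X i ^ p
    Qk Xk1 ≤ Qk Xk → J Xk1 = J Xk →
      (∀ i, rowNorm (A * Xk1 - Y) i = rowNorm (A * Xk - Y) i) ∧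
      (∀ i, rowNorm Xk1 i = rowNorm Xk i) := by
  intro Gk Hk Qk J hQ hJ
  have hq0 : 0 < q := by linarith
  have hr := fun i => rowNorm_pos (hrowR i)
  have hu := fun i => rowNorm_pos (hrowX i)
  simp only [Qk, Gk, Hk, J, trace_transpose_mul_diagonal_mul, one_div_mul_eq_div,
    sq_div_rpow_two_sub (hr _), sq_div_rpow_two_sub (hu _)] at hQ hJ
  set r := rowNorm (A * Xk - Y)
  set s := rowNorm (A * Xk1 - Y)
  set u := rowNorm Xk
  set t := rowNorm Xk1
  have hs : ∀ i, 0 ≤ s i := rowNorm_nonneg _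
  have ht : ∀ i, 0 ≤ t i := rowNorm_nonneg _
  have key : (q / 2 * ∑ i, s i ^ 2 / r i ^ (2 - q) + (1 - q / 2) * ∑ i, r i ^ q)
      + lam * (p / 2 * ∑ i, t i ^ 2 / u i ^ (2 - p) + (1 - p / 2) * ∑ i, u i ^ p)
      ≤ ∑ i, s i ^ q + lam * ∑ i, t i ^ p := by
    -- `q/2` times `hQ`, with `J(X_k)` replaced by `J(X_{k+1})` through `hJ`
    have := mul_le_mul_of_nonneg_left hQ (by positivity : 0 ≤ q / 2)
    field_simp at this ⊢
    linarith
  have hs_maj := sum_rpow_le_sum_majorant hq0 hq2 hr hs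
  have ht_maj := mul_le_mul_of_nonneg_left (sum_rpow_le_sum_majorant hp0 hp2 hu ht) hlam.le
  exact ⟨eq_of_sum_majorant_le_sum_rpow hq0 hq2 hr hs (by linarith),
    eq_of_sum_majorant_le_sum_rpow hp0 hp2 hu ht (le_of_mul_le_mul_left (by linarith) hlam)⟩
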